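/- arXiv:1510.07139 — 4 statements merged into one kernel-verified Lean document; each statement's English description precedes it below -/
import Mathlib

section
/- Let (X,Σ,μ) be an arbitrary measure space and 1 < p ≤ 2. Then for every x, y ∈ L_p(X,Σ,μ) we have ‖x‖_{L_p}^2 + (p−1)‖y‖_{L_p}^2 ≤ (‖x+y‖_{L_p}^2 + ‖x−y‖_{L_p}^2)/2. -/
/-!
Pointwise, the two-point inequality `(a² + (p-1) b²)^(p/2) ≤ (|a+b|^p + |a-b|^p) / 2` holds; after
scaling to `a = 1`, `b = t ∈ [0, 1]` it follows from two monotonicity arguments, the second of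
which uses `p ≤ 2`. Integrating it bounds the `L^(p/2)` "norm" of `x² + (p-1) y²` by
`((‖x+y‖_p^p + ‖x-y‖_p^p) / 2)^(2/p)`. Since `p/2 ≤ 1`, that quantity is superadditive on
nonnegative functions (reverse Minkowski), which gives `‖x‖_p² + (p-1)‖y‖_p²` on the left, while
convexity of `s ↦ s^(2/p)` gives the average of `‖x ± y‖_p²` on the right.
-/

open MeasureTheory Set
open scoped ENNReal

section TwoPoint
variable {p : ℝ}

noncomputable def twoPointGap (p t : ℝ) : ℝ :=
  ((1 + t) ^ p + (1 - t) ^ p) / 2 - (1 + (p - 1) * t ^ 2) ^ (p / 2)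

noncomputable def twoPointGapSlope (p t : ℝ) : ℝ :=
  ((1 + t) ^ (p - 1) - (1 - t) ^ (p - 1)) / 2 - (p - 1) * t * (1 + (p - 1) * t ^ 2) ^ (p / 2 - 1)

lemma continuous_twoPointGapSlope (hp : 1 ≤ p) : Continuous (twoPointGapSlope p) := by
  have hu : Continuous fun t : ℝ => (1 + (p - 1) * t ^ 2) ^ (p / 2 - 1) :=
    (by fun_prop : Continuous fun t : ℝ => 1 + (p - 1) * t ^ 2).rpow_const
      fun t => Or.inl (by nlinarith [sq_nonneg t])
  have : 0 ≤ p - 1 := by linarith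
  unfold twoPointGapSlope
  fun_prop (disch := assumption)

lemma continuous_twoPointGap (hp : 1 ≤ p) : Continuous (twoPointGap p) := by
  have hu : Continuous fun t : ℝ => (1 + (p - 1) * t ^ 2) ^ (p / 2) :=
    (by fun_prop : Continuous fun t : ℝ => 1 + (p - 1) * t ^ 2).rpow_const
      fun t => Or.inr (by linarith)
  have : 0 ≤ p := by linarith
  unfold twoPointGap
  fun_prop (disch := assumption)

lemma hasDerivAt_twoPointGap (hp : 1 ≤ p) {t : ℝ} (ht₀ : -1 < t) (ht₁ : t < 1) :
    HasDerivAt (twoPointGap p) (p * twoPointGapSlope p t) t := by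
  have hu : 0 < 1 + (p - 1) * t ^ 2 := by nlinarith [sq_nonneg t]
  have dplus := ((hasDerivAt_id t).const_add 1).rpow_const (p := p) (Or.inl (by simp; linarith))
  have dminus := ((hasDerivAt_id t).const_sub 1).rpow_const (p := p) (Or.inl (by simp; linarith))
  have du := ((((hasDerivAt_id t).pow 2).const_mul (p - 1)).const_add 1).rpow_const
    (p := p / 2) (Or.inl (by simpa using hu.ne'))
  refine (((dplus.add dminus).div_const 2).sub du).congr_deriv ?_
  simp only [twoPointGapSlope, id, Pi.pow_apply]
  ring

lemma hasDerivAt_twoPointGapSlope (hp : 1 ≤ p) {t : ℝ} (ht₀ : -1 < t) (ht₁ : t < 1) :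
    HasDerivAt (twoPointGapSlope p)
      ((p - 1) * (((1 + t) ^ (p - 2) + (1 - t) ^ (p - 2)) / 2
        - (1 + (p - 1) ^ 2 * t ^ 2) * (1 + (p - 1) * t ^ 2) ^ (p / 2 - 2))) t := by
  have hu : 0 < 1 + (p - 1) * t ^ 2 := by nlinarith [sq_nonneg t]
  have dplus :=
    ((hasDerivAt_id t).const_add 1).rpow_const (p := p - 1) (Or.inl (by simp; linarith))
  have dminus :=
    ((hasDerivAt_id t).const_sub 1).rpow_const (p := p - 1) (Or.inl (by simp; linarith))
  have du := ((((hasDerivAt_id t).pow 2).const_mul (p - 1)).const_add 1).rpow_const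
    (p := p / 2 - 1) (Or.inl (by simpa using hu.ne'))
  refine (((dplus.sub dminus).div_const 2).sub
    (((hasDerivAt_id t).const_mul (p - 1)).mul du)).congr_deriv ?_
  simp only [id, Pi.pow_apply]
  rw [show p - 1 - 1 = p - 2 by ring, show p / 2 - 1 - 1 = p / 2 - 2 by ring,
    show p / 2 - 1 = (p / 2 - 2) + 1 by ring, Real.rpow_add_one hu.ne']
  ring

lemma one_le_rpow_one_add_add_rpow_one_sub {q t : ℝ} (hq : q ≤ 0) (ht₀ : -1 < t) (ht₁ : t < 1) :
    1 ≤ ((1 + t) ^ q + (1 - t) ^ q) / 2 := by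
  have hplus : 0 < 1 + t := by linarith
  have hminus : 0 < 1 - t := by linarith
  have hprod : 1 ≤ (1 + t) ^ q * (1 - t) ^ q := by
    rw [← Real.mul_rpow hplus.le hminus.le]
    exact Real.one_le_rpow_of_pos_of_le_one_of_nonpos (by nlinarith) (by nlinarith [sq_nonneg t]) hq
  nlinarith [sq_nonneg ((1 + t) ^ q - (1 - t) ^ q), Real.rpow_nonneg hplus.le q,
    Real.rpow_nonneg hminus.le q]

lemma one_add_sq_mul_rpow_le_one (hp : 1 ≤ p) (hp2 : p ≤ 2) (t : ℝ) :
    (1 + (p - 1) ^ 2 * t ^ 2) * (1 + (p - 1) * t ^ 2) ^ (p / 2 - 2) ≤ 1 := by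
  set u := 1 + (p - 1) * t ^ 2
  have hu : 1 ≤ u := by nlinarith [sq_nonneg t]
  calc (1 + (p - 1) ^ 2 * t ^ 2) * u ^ (p / 2 - 2) ≤ u * u ^ (p / 2 - 2) := by
        gcongr
        nlinarith [sq_nonneg t, mul_nonneg (sub_nonneg.2 hp) (by linarith : (0 : ℝ) ≤ 2 - p)]
    _ = u ^ (p / 2 - 1) := by
        rw [show p / 2 - 1 = 1 + (p / 2 - 2) by ring, Real.rpow_add (by linarith), Real.rpow_one]
    _ ≤ 1 := Real.rpow_le_one_of_one_le_of_nonpos hu (by linarith)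

lemma twoPointGapSlope_nonneg (hp : 1 ≤ p) (hp2 : p ≤ 2) {t : ℝ} (ht : t ∈ Icc 0 1) :
    0 ≤ twoPointGapSlope p t := by
  have hmono : MonotoneOn (twoPointGapSlope p) (Icc 0 1) := by
    refine monotoneOn_of_deriv_nonneg (convex_Icc 0 1)
      (continuous_twoPointGapSlope hp).continuousOn (fun s hs => ?_) fun s hs => ?_
    all_goals rw [interior_Icc] at hs
    all_goals have hderiv := hasDerivAt_twoPointGapSlope hp (by linarith [hs.1]) hs.2
    · exact hderiv.differentiableAt.differentiableWithinAt
    · rw [hderiv.deriv]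
      have := one_le_rpow_one_add_add_rpow_one_sub (q := p - 2) (by linarith)
        (by linarith [hs.1]) hs.2
      have := one_add_sq_mul_rpow_le_one hp hp2 s
      exact mul_nonneg (by linarith) (by linarith)
  simpa [twoPointGapSlope] using hmono (left_mem_Icc.2 zero_le_one) ht ht.1

lemma twoPointGap_nonneg (hp : 1 ≤ p) (hp2 : p ≤ 2) {t : ℝ} (ht : t ∈ Icc 0 1) :
    0 ≤ twoPointGap p t := by
  have hmono : MonotoneOn (twoPointGap p) (Icc 0 1) := by
    refine monotoneOn_of_hasDerivWithinAt_nonneg (f' := fun s => p * twoPointGapSlope p s)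
      (convex_Icc 0 1) (continuous_twoPointGap hp).continuousOn (fun s hs => ?_) fun s hs => ?_
    all_goals rw [interior_Icc] at hs
    · exact (hasDerivAt_twoPointGap hp (by linarith [hs.1]) hs.2).hasDerivWithinAt
    · have := twoPointGapSlope_nonneg hp hp2 (Ioo_subset_Icc_self hs)
      have : 0 ≤ p := by linarith
      positivity
  simpa [twoPointGap] using hmono (left_mem_Icc.2 zero_le_one) ht ht.1

lemma two_point_inequality_of_le (hp : 1 ≤ p) (hp2 : p ≤ 2) {a b : ℝ} (hb : 0 ≤ b)
    (hba : b ≤ a) :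
    (a ^ 2 + (p - 1) * b ^ 2) ^ (p / 2) ≤ ((a + b) ^ p + (a - b) ^ p) / 2 := by
  have ha : 0 ≤ a := hb.trans hba
  obtain ⟨t, ht, rfl⟩ : ∃ t ∈ Icc (0 : ℝ) 1, b = a * t := by
    rcases ha.eq_or_lt with rfl | ha
    · exact ⟨0, left_mem_Icc.2 zero_le_one, by linarith⟩
    · exact ⟨b / a, ⟨by positivity, (div_le_one ha).2 hba⟩, by field_simp⟩
  have hsq : (a ^ 2) ^ (p / 2) = a ^ p := by
    rw [← Real.rpow_natCast, ← Real.rpow_mul ha]; ring_nf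
  have hgap := mul_nonneg (Real.rpow_nonneg ha p) (twoPointGap_nonneg hp hp2 ht)
  calc (a ^ 2 + (p - 1) * (a * t) ^ 2) ^ (p / 2) = a ^ p * (1 + (p - 1) * t ^ 2) ^ (p / 2) := by
        rw [← hsq, ← Real.mul_rpow (by positivity) (by nlinarith [sq_nonneg t])]; ring_nf
    _ ≤ (a ^ p * (1 + t) ^ p + a ^ p * (1 - t) ^ p) / 2 := by
        unfold twoPointGap at hgap; linarith
    _ = ((a + a * t) ^ p + (a - a * t) ^ p) / 2 := by
        rw [← Real.mul_rpow ha (by linarith [ht.1]), ← Real.mul_rpow ha (by linarith [ht.2])]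
        ring_nf

theorem two_point_inequality (hp : 1 ≤ p) (hp2 : p ≤ 2) (a b : ℝ) :
    (a ^ 2 + (p - 1) * b ^ 2) ^ (p / 2) ≤ (|a + b| ^ p + |a - b| ^ p) / 2 := by
  wlog hb : 0 ≤ b generalizing b
  · have := this (-b) (by linarith)
    rwa [neg_sq, ← sub_eq_add_neg, sub_neg_eq_add, add_comm (|a - b| ^ p)] at this
  wlog ha : 0 ≤ a generalizing a
  · have := this (-a) (by linarith)
    rwa [neg_sq, neg_add_eq_sub, abs_sub_comm, ← abs_neg (-a - b), neg_sub, sub_neg_eq_add,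
      add_comm b, add_comm (|a - b| ^ p)] at this
  -- Since `p - 1 ≤ 1`, the left side only grows when the coefficient `1` moves to the larger one.
  wlog hba : b ≤ a generalizing a b
  · have hab : a ^ 2 ≤ b ^ 2 := pow_le_pow_left₀ ha (le_of_not_ge hba) 2
    calc (a ^ 2 + (p - 1) * b ^ 2) ^ (p / 2) ≤ (b ^ 2 + (p - 1) * a ^ 2) ^ (p / 2) := by
          refine Real.rpow_le_rpow (by nlinarith) ?_ (by linarith)
          nlinarith [mul_le_mul_of_nonneg_left hab (by linarith : (0 : ℝ) ≤ 2 - p)]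
      _ ≤ (|b + a| ^ p + |b - a| ^ p) / 2 := this a ha b hb (by linarith)
      _ = (|a + b| ^ p + |a - b| ^ p) / 2 := by rw [add_comm b, abs_sub_comm]
  rw [abs_of_nonneg (by linarith), abs_of_nonneg (by linarith)]
  exact two_point_inequality_of_le hp hp2 hb hba

end TwoPoint

namespace ENNReal
variable {r : ℝ}

lemma arith_mean2_rpow_le_rpow_arith_mean2 (hr0 : 0 < r) (hr1 : r ≤ 1) {w₁ w₂ : ℝ≥0∞}
    (hw : w₁ + w₂ = 1) (z₁ z₂ : ℝ≥0∞) :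
    w₁ * z₁ ^ r + w₂ * z₂ ^ r ≤ (w₁ * z₁ + w₂ * z₂) ^ r := by
  have h := rpow_arith_mean_le_arith_mean2_rpow w₁ w₂ (z₁ ^ r) (z₂ ^ r) hw
    ((one_le_div hr0).2 hr1)
  rw [← rpow_mul, ← rpow_mul, mul_one_div_cancel hr0.ne', rpow_one, rpow_one] at h
  simpa only [one_div, rpow_inv_rpow hr0.ne'] using rpow_le_rpow h hr0.le

lemma rpow_mul_add_rpow_mul_le (hr0 : 0 < r) (hr1 : r ≤ 1) {w₁ w₂ : ℝ≥0∞}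
    (hw : w₁ + w₂ = 1) (hw₁ : w₁ ≠ 0) (hw₂ : w₂ ≠ 0) (u v : ℝ≥0∞) :
    w₁ ^ (1 - r) * u ^ r + w₂ ^ (1 - r) * v ^ r ≤ (u + v) ^ r := by
  have weight : ∀ {w : ℝ≥0∞} (z : ℝ≥0∞), w ≠ 0 → w ≤ 1 → w ^ (1 - r) * z ^ r = w * (z / w) ^ r := by
    intro w z h0 h1
    have htop : w ≠ ⊤ := ne_top_of_le_ne_top one_ne_top h1
    rw [div_rpow_of_nonneg _ _ hr0.le, div_eq_mul_inv, mul_left_comm, ← rpow_neg,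
      sub_eq_add_neg, rpow_add _ _ h0 htop, rpow_one, mul_comm]
  have hw₁1 : w₁ ≤ 1 := hw ▸ le_self_add
  have hw₂1 : w₂ ≤ 1 := hw ▸ le_add_self
  rw [weight u hw₁ hw₁1, weight v hw₂ hw₂1]
  convert arith_mean2_rpow_le_rpow_arith_mean2 hr0 hr1 hw (u / w₁) (v / w₂) using 2
  rw [ENNReal.mul_div_cancel hw₁ (ne_top_of_le_ne_top one_ne_top hw₁1),
    ENNReal.mul_div_cancel hw₂ (ne_top_of_le_ne_top one_ne_top hw₂1)]

lemma add_div_two_rpow_le {s : ℝ} (hs : 1 ≤ s) (u v : ℝ≥0∞) :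
    ((u + v) / 2) ^ s ≤ (u ^ s + v ^ s) / 2 := by
  simpa only [ENNReal.div_eq_inv_mul, mul_add] using
    rpow_arith_mean_le_arith_mean2_rpow 2⁻¹ 2⁻¹ u v inv_two_add_inv_two hs

end ENNReal

section ReverseMinkowski
open ENNReal
variable {α : Type*} [MeasurableSpace α] {μ : Measure α} {r : ℝ}

lemma lintegral_Lp_le_lintegral_Lp_add (hr0 : 0 < r) (f g : α → ℝ≥0∞) :
    (∫⁻ a, f a ^ r ∂μ) ^ (1 / r) ≤ (∫⁻ a, (f a + g a) ^ r ∂μ) ^ (1 / r) := by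
  gcongr with a
  exact le_self_add

theorem lintegral_Lp_add_ge_of_le_one (hr0 : 0 < r) (hr1 : r ≤ 1) (f g : α → ℝ≥0∞) :
    (∫⁻ a, f a ^ r ∂μ) ^ (1 / r) + (∫⁻ a, g a ^ r ∂μ) ^ (1 / r)
      ≤ (∫⁻ a, (f a + g a) ^ r ∂μ) ^ (1 / r) := by
  set A := (∫⁻ a, f a ^ r ∂μ) ^ (1 / r)
  set B := (∫⁻ a, g a ^ r ∂μ) ^ (1 / r)
  have hA : A ≤ (∫⁻ a, (f a + g a) ^ r ∂μ) ^ (1 / r) := lintegral_Lp_le_lintegral_Lp_add hr0 f g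
  have hB : B ≤ (∫⁻ a, (f a + g a) ^ r ∂μ) ^ (1 / r) := by
    simpa only [add_comm (g _)] using lintegral_Lp_le_lintegral_Lp_add hr0 g f (μ := μ)
  rcases eq_or_ne A 0 with hA0 | hA0
  · simpa [hA0] using hB
  rcases eq_or_ne B 0 with hB0 | hB0
  · simpa [hB0] using hA
  rcases eq_top_or_lt_top (A + B) with hS | hS
  · have htop : (∫⁻ a, (f a + g a) ^ r ∂μ) ^ (1 / r) = ⊤ := by
      rcases add_eq_top.1 hS with h | h
      exacts [top_le_iff.1 (h ▸ hA), top_le_iff.1 (h ▸ hB)]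
    rw [htop]
    exact le_top
  set S := A + B
  have hS0 : S ≠ 0 := by simp [S, hA0]
  have hw : A / S + B / S = 1 := by rw [ENNReal.div_add_div_same, ENNReal.div_self hS0 hS.ne]
  have hcancel : ∀ C : ℝ≥0∞, (C ^ (1 / r)) ^ r = C := fun C => by
    rw [← rpow_mul, one_div_mul_cancel hr0.ne', rpow_one]
  have hsplit : ∀ X : ℝ≥0∞, (X / S) ^ (1 - r) * X ^ r = X / S * S ^ r := fun X =>
    calc (X / S) ^ (1 - r) * X ^ r = (X / S) ^ (1 - r) * (X / S * S) ^ r := by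
          rw [ENNReal.div_mul_cancel hS0 hS.ne]
      _ = (X / S) ^ (1 - r + r) * S ^ r := by
          rw [mul_rpow_of_nonneg _ _ hr0.le, ← mul_assoc,
            ← rpow_add_of_nonneg _ _ (by linarith) hr0.le]
      _ = X / S * S ^ r := by rw [sub_add_cancel, rpow_one]
  have hfinite : ∀ X : ℝ≥0∞, X ≤ S → (X / S) ^ (1 - r) ≠ ⊤ := fun X hX =>
    rpow_ne_top_of_nonneg (by linarith) (div_ne_top (hX.trans_lt hS).ne hS0)
  -- Concavity of `t ↦ t ^ r` with the weights `A / S`, `B / S`, for which the bound is sharp.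
  have hSr : S ^ r ≤ ∫⁻ a, (f a + g a) ^ r ∂μ :=
    calc S ^ r = (A / S) ^ (1 - r) * A ^ r + (B / S) ^ (1 - r) * B ^ r := by
          rw [hsplit, hsplit, ← add_mul, hw, one_mul]
      _ = ∫⁻ a, (A / S) ^ (1 - r) * f a ^ r ∂μ + ∫⁻ a, (B / S) ^ (1 - r) * g a ^ r ∂μ := by
          rw [lintegral_const_mul' _ _ (hfinite A le_self_add),
            lintegral_const_mul' _ _ (hfinite B le_add_self),
            hcancel, hcancel]
      _ ≤ ∫⁻ a, ((A / S) ^ (1 - r) * f a ^ r + (B / S) ^ (1 - r) * g a ^ r) ∂μ :=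
          le_lintegral_add _ _
      _ ≤ ∫⁻ a, (f a + g a) ^ r ∂μ := lintegral_mono fun a =>
          rpow_mul_add_rpow_mul_le hr0 hr1 hw (by simp [hA0, hS.ne]) (by simp [hB0, hS.ne]) _ _
  calc S = (S ^ r) ^ (1 / r) := by rw [← rpow_mul, mul_one_div_cancel hr0.ne', rpow_one]
    _ ≤ _ := rpow_le_rpow hSr (by positivity)

end ReverseMinkowski

section UniformConvexity
open ENNReal
variable {X : Type*} [MeasurableSpace X] {μ : Measure X} {p : ℝ}

lemma eLpNorm_ofReal_sq (hp : 0 < p) (f : X → ℝ) :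
    eLpNorm f (ENNReal.ofReal p) μ ^ 2 = (∫⁻ a, ‖f a‖ₑ ^ p ∂μ) ^ (1 / (p / 2)) := by
  rw [eLpNorm_eq_lintegral_rpow_enorm_toReal (by simpa using hp) ofReal_ne_top,
    toReal_ofReal hp.le, ← rpow_natCast, ← rpow_mul]
  congr 1
  field_simp
  norm_num

lemma enorm_two_point_inequality (hp : 1 ≤ p) (hp2 : p ≤ 2) (a b : ℝ) :
    (‖a‖ₑ ^ 2 + ENNReal.ofReal (p - 1) * ‖b‖ₑ ^ 2) ^ (p / 2)
      ≤ (‖a + b‖ₑ ^ p + ‖a - b‖ₑ ^ p) / 2 := by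
  simp only [Real.enorm_eq_ofReal_abs, ← ofReal_pow (abs_nonneg _), sq_abs]
  rw [← ofReal_mul (by linarith), ← ofReal_add (sq_nonneg _) (by nlinarith [sq_nonneg b]),
    ofReal_rpow_of_nonneg (by nlinarith [sq_nonneg a, sq_nonneg b]) (by linarith),
    ofReal_rpow_of_nonneg (abs_nonneg _) (by linarith),
    ofReal_rpow_of_nonneg (abs_nonneg _) (by linarith),
    ← ofReal_add (by positivity) (by positivity), ← ofReal_ofNat 2, ← ofReal_div_of_pos two_pos]
  exact ofReal_le_ofReal (two_point_inequality hp hp2 a b)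

theorem eLpNorm_sq_add_mul_eLpNorm_sq_le (hp : 1 ≤ p) (hp2 : p ≤ 2) {f g : X → ℝ}
    (hf : AEStronglyMeasurable f μ) (hg : AEStronglyMeasurable g μ) :
    eLpNorm f (ENNReal.ofReal p) μ ^ 2 + ENNReal.ofReal (p - 1) * eLpNorm g (ENNReal.ofReal p) μ ^ 2
      ≤ (eLpNorm (f + g) (ENNReal.ofReal p) μ ^ 2
          + eLpNorm (f - g) (ENNReal.ofReal p) μ ^ 2) / 2 := by
  have hp0 : 0 < p := by linarith
  have hr0 : 0 < p / 2 := by positivity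
  set c := ENNReal.ofReal (p - 1)
  have hsq : ∀ z : ℝ≥0∞, (z ^ 2) ^ (p / 2) = z ^ p := fun z => by
    rw [← rpow_natCast, ← rpow_mul]; congr 1; push_cast; ring
  have hcg : (∫⁻ a, (c * ‖g a‖ₑ ^ 2) ^ (p / 2) ∂μ) ^ (1 / (p / 2))
      = c * (∫⁻ a, ‖g a‖ₑ ^ p ∂μ) ^ (1 / (p / 2)) := by
    simp_rw [mul_rpow_of_nonneg _ _ hr0.le, hsq]
    rw [lintegral_const_mul' _ _ (rpow_ne_top_of_nonneg hr0.le ofReal_ne_top),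
      mul_rpow_of_nonneg _ _ (by positivity), ← rpow_mul, mul_one_div_cancel hr0.ne', rpow_one]
  calc eLpNorm f (ENNReal.ofReal p) μ ^ 2 + c * eLpNorm g (ENNReal.ofReal p) μ ^ 2
      = (∫⁻ a, (‖f a‖ₑ ^ 2) ^ (p / 2) ∂μ) ^ (1 / (p / 2))
          + (∫⁻ a, (c * ‖g a‖ₑ ^ 2) ^ (p / 2) ∂μ) ^ (1 / (p / 2)) := by
        simp_rw [hcg, hsq, eLpNorm_ofReal_sq hp0]
    _ ≤ (∫⁻ a, (‖f a‖ₑ ^ 2 + c * ‖g a‖ₑ ^ 2) ^ (p / 2) ∂μ) ^ (1 / (p / 2)) :=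
        lintegral_Lp_add_ge_of_le_one hr0 (by linarith) _ _
    _ ≤ (∫⁻ a, (‖(f + g) a‖ₑ ^ p + ‖(f - g) a‖ₑ ^ p) / 2 ∂μ) ^ (1 / (p / 2)) := by
        gcongr with a
        exact enorm_two_point_inequality hp hp2 (f a) (g a)
    _ = ((∫⁻ a, ‖(f + g) a‖ₑ ^ p ∂μ + ∫⁻ a, ‖(f - g) a‖ₑ ^ p ∂μ) / 2) ^ (1 / (p / 2)) := by
        simp_rw [div_eq_mul_inv]
        rw [lintegral_mul_const' _ _ (by simp), lintegral_add_left' ((hf.add hg).enorm.pow_const p)]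
    _ ≤ _ := by
        simpa only [eLpNorm_ofReal_sq hp0] using
          ENNReal.add_div_two_rpow_le ((one_le_div hr0).2 (by linarith)) _ _

end UniformConvexity

/-- **Uniform convexity of `L_p`, `1 < p ≤ 2` (Ball–Carlen–Lieb).**
For all `x, y ∈ L_p`: `‖x‖_p² + (p-1)‖y‖_p² ≤ (‖x+y‖_p² + ‖x-y‖_p²)/2`. -/
theorem stmt1 {X : Type*} {m0 : MeasurableSpace X} (μ : Measure X)
    (p : ℝ) (hp : 1 < p) (hp2 : p ≤ 2) (x y : X → ℝ)
    (hx : MemLp x (ENNReal.ofReal p) μ) (hy : MemLp y (ENNReal.ofReal p) μ) :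
    (eLpNorm x (ENNReal.ofReal p) μ).toReal ^ 2
        + (p - 1) * (eLpNorm y (ENNReal.ofReal p) μ).toReal ^ 2
      ≤ ((eLpNorm (x + y) (ENNReal.ofReal p) μ).toReal ^ 2
          + (eLpNorm (x - y) (ENNReal.ofReal p) μ).toReal ^ 2) / 2 := by
  have hfin : ∀ {f : X → ℝ}, MemLp f (ENNReal.ofReal p) μ →
      eLpNorm f (ENNReal.ofReal p) μ ^ 2 ≠ ⊤ :=
    fun hf => ENNReal.pow_ne_top hf.eLpNorm_ne_top
  have h := ENNReal.toReal_mono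
    (ENNReal.div_ne_top (ENNReal.add_ne_top.2 ⟨hfin (hx.add hy), hfin (hx.sub hy)⟩) two_ne_zero)
    (eLpNorm_sq_add_mul_eLpNorm_sq_le hp.le hp2 hx.1 hy.1)
  rw [ENNReal.toReal_add (hfin hx) (ENNReal.mul_ne_top ENNReal.ofReal_ne_top (hfin hy)),
    ENNReal.toReal_div, ENNReal.toReal_add (hfin (hx.add hy)) (hfin (hx.sub hy)),
    ENNReal.toReal_mul, ENNReal.toReal_ofReal (by linarith), ENNReal.toReal_ofNat] at h
  simpa only [ENNReal.toReal_pow] using h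
end

section
/- Let 0 < η < 1 and let (X,Σ,μ) be a probability space such that μ(A) ≤ η for every atom A of (X,Σ,μ). Let B ∈ Σ with μ(B) > η, and let η ≤ c < μ(B). Then there exists C ∈ Σ with C ⊆ B and c ≤ μ(C) < c + η. -/
/-! Every set `D` of positive finite measure contains a subset of positive measure at most `ε`:
if the infimum `m` of the positive measures of subsets of `D` is at least `ε`, a subset of measure
below `2m` cannot be split into two pieces of positive measure, so it is an atom.
Now exhaust `B` greedily, adding at each stage a piece of measure at most `ε` that is at least half
as large as any such piece of the remainder. Were the measures of the stages to stay below `c`,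
their union would leave a remainder of positive measure, which contains a piece of positive
measure `a ≤ ε`; every stage then adds at least `a / 2`, which is absurd. The first stage of
measure at least `c` overshoots `c` by less than `ε`. -/

open MeasureTheory

open scoped ENNReal

section greedyUnion

variable {X : Type*}

def greedyUnion (step : Set X → Set X) : ℕ → Set X
  | 0 => ∅
  | n + 1 => greedyUnion step n ∪ step (greedyUnion step n)

variable {step : Set X → Set X}

theorem monotone_greedyUnion : Monotone (greedyUnion step) :=
  monotone_nat_of_le_succ fun _ => Set.subset_union_left

theorem greedyUnion_subset {B : Set X} (hsub : ∀ C, step C ⊆ B) (n : ℕ) :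
    greedyUnion step n ⊆ B := by
  induction n with
  | zero => exact Set.empty_subset B
  | succ n ih => exact Set.union_subset ih (hsub _)

theorem measurableSet_greedyUnion [MeasurableSpace X] (hmeas : ∀ C, MeasurableSet (step C))
    (n : ℕ) : MeasurableSet (greedyUnion step n) := by
  induction n with
  | zero => exact MeasurableSet.empty
  | succ n ih => exact ih.union (hmeas _)

end greedyUnion

namespace MeasureTheory.Measure

variable {X : Type*} [MeasurableSpace X]

def IsAtom (μ : Measure X) (A : Set X) : Prop :=
  MeasurableSet A ∧ 0 < μ A ∧ ∀ B ⊆ A, MeasurableSet B → μ B = 0 ∨ μ B = μ A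

variable {μ : Measure X}

theorem isAtom_of_measure_lt_two_mul {D E : Set X} {m : ℝ≥0∞}
    (hmin : ∀ F ⊆ D, MeasurableSet F → 0 < μ F → m ≤ μ F)
    (hED : E ⊆ D) (hE : MeasurableSet E) (hE0 : 0 < μ E) (hEm : μ E < 2 * m) :
    μ.IsAtom E := by
  refine ⟨hE, hE0, fun F hFE hF => ?_⟩
  have hsplit : μ F + μ (E \ F) = μ E := by
    simpa [Set.inter_eq_right.2 hFE] using measure_inter_add_sdiff (μ := μ) E hF
  rcases eq_zero_or_pos (μ F) with hF0 | hFpos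
  · exact Or.inl hF0
  rcases eq_zero_or_pos (μ (E \ F)) with hEF0 | hEFpos
  · exact Or.inr (by simpa [hEF0] using hsplit)
  have h2m : 2 * m ≤ μ E := by
    rw [two_mul, ← hsplit]
    exact add_le_add (hmin F (hFE.trans hED) hF hFpos)
      (hmin _ (Set.sdiff_subset.trans hED) (hE.diff hF) hEFpos)
  exact absurd hEm h2m.not_gt

theorem exists_subset_measure_pos_le {ε : ℝ≥0∞} (hε : 0 < ε)
    (hatom : ∀ A, μ.IsAtom A → μ A ≤ ε) {D : Set X} (hD : MeasurableSet D)
    (hD0 : 0 < μ D) (hDtop : μ D ≠ ∞) :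
    ∃ E ⊆ D, MeasurableSet E ∧ 0 < μ E ∧ μ E ≤ ε := by
  set m := sInf (μ '' {F | F ⊆ D ∧ MeasurableSet F ∧ 0 < μ F})
  have hmin : ∀ F ⊆ D, MeasurableSet F → 0 < μ F → m ≤ μ F :=
    fun F hFD hF hF0 => sInf_le ⟨F, ⟨hFD, hF, hF0⟩, rfl⟩
  rcases lt_or_ge m ε with hmε | hεm
  · obtain ⟨_, ⟨E, ⟨hED, hE, hE0⟩, rfl⟩, hEε⟩ := sInf_lt_iff.1 hmε
    exact ⟨E, hED, hE, hE0, hEε.le⟩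
  have hm_lt : m < 2 * m := by
    rw [two_mul]
    exact ENNReal.lt_add_right (ne_top_of_le_ne_top hDtop (hmin D subset_rfl hD hD0))
      (hε.trans_le hεm).ne'
  obtain ⟨_, ⟨E, ⟨hED, hE, hE0⟩, rfl⟩, hE2m⟩ := sInf_lt_iff.1 hm_lt
  exact ⟨E, hED, hE, hE0, hatom E (isAtom_of_measure_lt_two_mul hmin hED hE hE0 hE2m)⟩

theorem exists_subset_almost_maximal {ε : ℝ≥0∞} (hε : ε ≠ ∞) (D : Set X) :
    ∃ E ⊆ D, MeasurableSet E ∧ μ E ≤ ε ∧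
      ∀ F ⊆ D, MeasurableSet F → μ F ≤ ε → μ F ≤ 2 * μ E := by
  set σ := sSup (μ '' {F | F ⊆ D ∧ MeasurableSet F ∧ μ F ≤ ε})
  have hmax : ∀ F ⊆ D, MeasurableSet F → μ F ≤ ε → μ F ≤ σ :=
    fun F hFD hF hFε => le_sSup ⟨F, ⟨hFD, hF, hFε⟩, rfl⟩
  rcases eq_or_ne σ 0 with hσ0 | hσ0
  · refine ⟨∅, Set.empty_subset D, MeasurableSet.empty, by simp, fun F hFD hF hFε => ?_⟩
    simpa [hσ0] using hmax F hFD hF hFε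
  have hσε : σ ≤ ε := sSup_le (by rintro _ ⟨F, ⟨-, -, hFε⟩, rfl⟩; exact hFε)
  obtain ⟨_, ⟨E, ⟨hED, hE, hEε⟩, rfl⟩, hσE⟩ :=
    lt_sSup_iff.1 (ENNReal.half_lt_self hσ0 (ne_top_of_le_ne_top hε hσε))
  refine ⟨E, hED, hE, hEε, fun F hFD hF hFε => ?_⟩
  calc μ F ≤ σ := hmax F hFD hF hFε
    _ = 2 * (σ / 2) := (ENNReal.mul_div_cancel two_ne_zero ENNReal.ofNat_ne_top).symm
    _ ≤ 2 * μ E := by gcongr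

variable {step : Set X → Set X}

theorem measure_greedyUnion_succ (hdisj : ∀ C, Disjoint C (step C))
    (hmeas : ∀ C, MeasurableSet (step C)) (n : ℕ) :
    μ (greedyUnion step (n + 1)) = μ (greedyUnion step n) + μ (step (greedyUnion step n)) :=
  measure_union (hdisj _) (hmeas _)

theorem nat_mul_le_two_mul_measure_greedyUnion (hdisj : ∀ C, Disjoint C (step C))
    (hmeas : ∀ C, MeasurableSet (step C)) {a : ℝ≥0∞}
    (ha : ∀ n, a ≤ 2 * μ (step (greedyUnion step n))) (n : ℕ) :
    n * a ≤ 2 * μ (greedyUnion step n) := by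
  induction n with
  | zero => simp
  | succ n ih =>
    rw [measure_greedyUnion_succ hdisj hmeas, mul_add, Nat.cast_succ, add_one_mul]
    exact add_le_add ih (ha n)

variable {ε c : ℝ≥0∞} {B : Set X}

theorem exists_le_measure_greedyUnion (hε : 0 < ε) (hatom : ∀ A, μ.IsAtom A → μ A ≤ ε)
    (hB : MeasurableSet B) (hBtop : μ B ≠ ∞) (hc : c < μ B)
    (hsub : ∀ C, step C ⊆ B \ C) (hmeas : ∀ C, MeasurableSet (step C))
    (hmax : ∀ C, ∀ F ⊆ B \ C, MeasurableSet F → μ F ≤ ε → μ F ≤ 2 * μ (step C)) :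
    ∃ n, c ≤ μ (greedyUnion step n) := by
  by_contra! hlt
  set U := ⋃ n, greedyUnion step n
  have hU : MeasurableSet U := MeasurableSet.iUnion (measurableSet_greedyUnion hmeas)
  have hUc : μ U ≤ c := by
    rw [monotone_greedyUnion.measure_iUnion]
    exact iSup_le fun n => (hlt n).le
  have hBU : 0 < μ (B \ U) :=
    (tsub_pos_iff_lt.2 (hUc.trans_lt hc)).trans_le le_measure_sdiff
  obtain ⟨E, hEBU, hE, hE0, hEε⟩ := exists_subset_measure_pos_le hε hatom (hB.diff hU) hBU
    (ne_top_of_le_ne_top hBtop (measure_mono Set.sdiff_subset))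
  have hgrow : ∀ n : ℕ, n * μ E ≤ 2 * μ (greedyUnion step n) :=
    nat_mul_le_two_mul_measure_greedyUnion
      (fun C => Set.disjoint_sdiff_right.mono_right (hsub C)) hmeas fun n =>
        hmax _ E (hEBU.trans (Set.sdiff_subset_sdiff_right (Set.subset_iUnion _ n))) hE hEε
  obtain ⟨n, hn⟩ := ENNReal.exists_nat_mul_gt hE0.ne'
    (ENNReal.mul_ne_top (a := 2) (by norm_num) hc.ne_top)
  exact (hn.trans_le (hgrow n)).not_ge (by gcongr; exact (hlt n).le)

theorem exists_subset_le_measure_lt_add (hε0 : 0 < ε) (hε : ε ≠ ∞)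
    (hatom : ∀ A, μ.IsAtom A → μ A ≤ ε) (hB : MeasurableSet B) (hBtop : μ B ≠ ∞)
    (hc : c < μ B) : ∃ C ⊆ B, MeasurableSet C ∧ c ≤ μ C ∧ μ C < c + ε := by
  classical
  choose step hsub hmeas hstep_le hmax using
    fun C => exists_subset_almost_maximal (μ := μ) hε (B \ C)
  have hdisj : ∀ C, Disjoint C (step C) := fun C => Set.disjoint_sdiff_right.mono_right (hsub C)
  have hreach := exists_le_measure_greedyUnion hε0 hatom hB hBtop hc hsub hmeas hmax
  refine ⟨_, greedyUnion_subset (fun C => (hsub C).trans Set.sdiff_subset) _,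
    measurableSet_greedyUnion hmeas _, Nat.find_spec hreach, ?_⟩
  rcases hfind : Nat.find hreach with _ | k
  · simpa [greedyUnion] using hε0.trans_le le_add_self
  · have hk : μ (greedyUnion step k) < c :=
      not_le.1 (Nat.find_min hreach (hfind ▸ k.lt_succ_self))
    rw [measure_greedyUnion_succ hdisj hmeas]
    exact ENNReal.add_lt_add_of_lt_of_le (ne_top_of_le_ne_top hε (hstep_le _)) hk (hstep_le _)

end MeasureTheory.Measure

theorem stmt2_general {X : Type*} [MeasurableSpace X] (μ : Measure X) [IsProbabilityMeasure μ]
    (η : ℝ) (hη0 : 0 < η)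
    (hatom : ∀ A : Set X, MeasurableSet A → 0 < μ A →
      (∀ B : Set X, B ⊆ A → MeasurableSet B → μ B = 0 ∨ μ B = μ A) →
      (μ A).toReal ≤ η)
    (B : Set X) (hB : MeasurableSet B)
    (c : ℝ) (hc1 : η ≤ c) (hc2 : c < (μ B).toReal) :
    ∃ C : Set X, MeasurableSet C ∧ C ⊆ B ∧ c ≤ (μ C).toReal ∧ (μ C).toReal < c + η := by
  have hc0 : 0 ≤ c := hη0.le.trans hc1
  have hatom' : ∀ A, μ.IsAtom A → μ A ≤ ENNReal.ofReal η := fun A hA =>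
    (ENNReal.le_ofReal_iff_toReal_le (measure_ne_top μ A) hη0.le).2
      (hatom A hA.1 hA.2.1 hA.2.2)
  obtain ⟨C, hCB, hC, hcC, hCc⟩ := Measure.exists_subset_le_measure_lt_add
    (ENNReal.ofReal_pos.2 hη0) ENNReal.ofReal_ne_top hatom' hB (measure_ne_top μ B)
    ((ENNReal.ofReal_lt_iff_lt_toReal hc0 (measure_ne_top μ B)).2 hc2)
  rw [← ENNReal.ofReal_add hc0 hη0.le] at hCc
  exact ⟨C, hC, hCB, (ENNReal.ofReal_le_iff_le_toReal (measure_ne_top μ C)).1 hcC,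
    (ENNReal.lt_ofReal_iff_toReal_lt (measure_ne_top μ C)).1 hCc⟩

/-- **Approximate Sierpiński theorem for spaces with small atoms.**
If every atom of the probability space `(X, μ)` has measure at most `η`,
`B` is measurable with `μ(B) > η` and `η ≤ c < μ(B)`, then there is a measurable
`C ⊆ B` with `c ≤ μ(C) < c + η`. -/
theorem stmt2 {X : Type*} [MeasurableSpace X] (μ : Measure X) [IsProbabilityMeasure μ]
    (η : ℝ) (hη0 : 0 < η) (hη1 : η < 1)
    (hatom : ∀ A : Set X, MeasurableSet A → 0 < μ A →
      (∀ B : Set X, B ⊆ A → MeasurableSet B → μ B = 0 ∨ μ B = μ A) →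
      (μ A).toReal ≤ η)
    (B : Set X) (hB : MeasurableSet B) (hBη : η < (μ B).toReal)
    (c : ℝ) (hc1 : η ≤ c) (hc2 : c < (μ B).toReal) :
    ∃ C : Set X, MeasurableSet C ∧ C ⊆ B ∧ c ≤ (μ C).toReal ∧ (μ C).toReal < c + η :=
  stmt2_general μ η hη0 hatom B hB c hc1 hc2
end

section
/- Let r be a positive integer, 0 < θ < 1, (X,Σ,μ) a probability space, and B_1,…,B_r sub-σ-algebras of Σ. Let S = { ∩_{i=1}^r A_i : A_i ∈ B_i for each i }. Then for every A ∈ S with μ(A) ≥ θ there exist: (i) a finite partition Q of X with Q ⊆ S and μ(Q') ≥ θ for every Q' ∈ Q; (ii) a set B ∈ Q with A ⊆ B; and (iii) pairwise disjoint sets B_1',…,B_r' ∈ S with μ(B_i') < θ for each i, such that B \ A = ∪_{i=1}^r B_i'. -/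
open MeasureTheory

open MeasureTheory Set

section Aux
variable {X : Type*} [MeasurableSpace X] (A : ℕ → Set X) (μ : Measure X) (θ : ℝ)

open Classical in
noncomputable def pTower : ℕ → Set X
  | 0 => Set.univ
  | n + 1 => if (μ (pTower n ∩ (A n)ᶜ)).toReal < θ then pTower n else pTower n ∩ A n

open Classical in
def pCond (n : ℕ) : Prop := (μ (pTower A μ θ n ∩ (A n)ᶜ)).toReal < θ

open Classical in
lemma pTower_succ (n : ℕ) :
    pTower A μ θ (n + 1) =
      if pCond A μ θ n then pTower A μ θ n else pTower A μ θ n ∩ A n := by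
  rw [pCond]; rfl

lemma pTower_succ_subset (n : ℕ) : pTower A μ θ (n + 1) ⊆ pTower A μ θ n := by
  rw [pTower_succ]; split
  · exact subset_rfl
  · exact inter_subset_left

lemma pTower_mono {n m : ℕ} (h : n ≤ m) : pTower A μ θ m ⊆ pTower A μ θ n := by
  induction m with
  | zero => simp_all
  | succ k ih =>
    rcases Nat.lt_or_ge n (k+1) with h' | h'
    · exact (pTower_succ_subset A μ θ k).trans (ih (Nat.lt_succ_iff.mp h'))
    · have : n = k + 1 := le_antisymm h h'
      subst this; exact subset_rfl

lemma subset_pTower {s : Set X} (hs : ∀ n, s ⊆ A n) (n : ℕ) : s ⊆ pTower A μ θ n := by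
  induction n with
  | zero => simp [pTower]
  | succ k ih =>
    rw [pTower_succ]; split
    · exact ih
    · exact subset_inter ih (hs k)

open Classical in
lemma pTower_eq (n : ℕ) :
    pTower A μ θ n = ⋂ l ∈ Finset.range n, (if pCond A μ θ l then Set.univ else A l) := by
  induction n with
  | zero => simp [pTower]
  | succ k ih =>
    rw [pTower_succ, Finset.range_add_one]
    by_cases h : pCond A μ θ k <;> simp [h, ih, Set.inter_comm]

open Classical in
lemma pTower_union (n : ℕ) :
    pTower A μ θ n ∪
      (⋃ l ∈ Finset.range n,
        (if pCond A μ θ l then (∅ : Set X) else pTower A μ θ l ∩ (A l)ᶜ)) = Set.univ := by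
  induction n with
  | zero => simp [pTower]
  | succ k ih =>
    rw [Finset.range_add_one, Finset.set_biUnion_insert, ← Set.union_assoc]
    have hkey : pTower A μ θ (k+1) ∪
        (if pCond A μ θ k then (∅ : Set X) else pTower A μ θ k ∩ (A k)ᶜ)
        = pTower A μ θ k := by
      rw [pTower_succ]
      by_cases h : pCond A μ θ k
      · simp [h]
      · simp only [h, if_neg h, if_false]
        rw [← Set.inter_union_distrib_left, Set.union_compl_self, Set.inter_univ]
    rw [hkey, ih]

end Aux

/-- **Partition lemma (Lemma 4.2).** Let `B_1, …, B_r` be sub-σ-algebras of a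
probability space and `S` the family of intersections `⋂ i, A i` with `A i`
`B i`-measurable.  For every `A ∈ S` with `μ(A) ≥ θ` there are a finite partition
`Q ⊆ S` of `X` with all cells of measure `≥ θ`, a cell `B ∈ Q` containing `A`, and
pairwise disjoint `B'_1, …, B'_r ∈ S` of measure `< θ` with `B \ A = ⋃ i, B'_i`. -/
theorem stmt3 {X : Type*} {m0 : MeasurableSpace X} (μ : Measure X) [IsProbabilityMeasure μ]
    (r : ℕ) (hr : 0 < r) (θ : ℝ) (hθ0 : 0 < θ) (hθ1 : θ < 1)
    (𝔅 : Fin r → MeasurableSpace X) (h𝔅 : ∀ i, 𝔅 i ≤ m0)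
    (S : Set (Set X))
    (hS : S = {s : Set X | ∃ A : Fin r → Set X,
      (∀ i, MeasurableSet[𝔅 i] (A i)) ∧ s = ⋂ i, A i})
    (A : Set X) (hA : A ∈ S) (hAθ : θ ≤ (μ A).toReal) :
    ∃ Q : Finset (Set X),
      (∀ s ∈ Q, s ∈ S) ∧ (Q : Set (Set X)).PairwiseDisjoint id ∧
      ⋃₀ (Q : Set (Set X)) = Set.univ ∧ (∀ s ∈ Q, θ ≤ (μ s).toReal) ∧
      ∃ B ∈ Q, A ⊆ B ∧
        ∃ B' : Fin r → Set X, (∀ i, B' i ∈ S) ∧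
          Pairwise (Function.onFun Disjoint B') ∧
          (∀ i, (μ (B' i)).toReal < θ) ∧ B \ A = ⋃ i, B' i := by
  classical
  rw [hS] at hA
  obtain ⟨A', hA'meas, hAeq⟩ := hA
  -- extend the family to ℕ
  set A'' : ℕ → Set X := fun n => if h : n < r then A' ⟨n, h⟩ else Set.univ with hA''def
  have hA''Fin : ∀ i : Fin r, A'' (i : ℕ) = A' i := by
    intro i; simp [hA''def, i.isLt]
  have hA''meas : ∀ i : Fin r, MeasurableSet[𝔅 i] (A'' (i : ℕ)) := by
    intro i; rw [hA''Fin]; exact hA'meas i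
  have hAsubA' : ∀ i : Fin r, A ⊆ A' i := by
    intro i; rw [hAeq]; exact Set.iInter_subset _ i
  have hAsub : ∀ n : ℕ, A ⊆ A'' n := by
    intro n
    by_cases h : n < r
    · simp only [hA''def, dif_pos h]; exact hAsubA' ⟨n, h⟩
    · simp only [hA''def, dif_neg h]; exact Set.subset_univ _
  set T : ℕ → Set X := pTower A'' μ θ with hTdef
  set c : ℕ → Prop := pCond A'' μ θ with hcdef
  set E : ℕ → Set X := fun l => if c l then Set.univ else A'' l with hEdef
  have hmono : ∀ {s t : Set X}, s ⊆ t → (μ s).toReal ≤ (μ t).toReal := by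
    intro s t h
    exact ENNReal.toReal_mono (measure_ne_top μ _) (measure_mono h)
  -- closed form of T
  have hTrange : ∀ n, T n = ⋂ l ∈ Finset.range n, E l := fun n => pTower_eq A'' μ θ n
  have hTr_eq : T r = ⋂ i : Fin r, E (i : ℕ) := by
    rw [hTrange]
    ext x
    simp only [Set.mem_iInter, Finset.mem_range]
    exact ⟨fun h i => h i i.isLt, fun h l hl => h ⟨l, hl⟩⟩
  have hEmeas : ∀ i : Fin r, MeasurableSet[𝔅 i] (E (i : ℕ)) := by
    intro i
    by_cases h : c (i : ℕ)
    · simp only [hEdef, if_pos h]; exact MeasurableSet.univ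
    · simp only [hEdef, if_neg h]; exact hA''meas i
  have hTrS : T r ∈ S := by
    rw [hS]; exact ⟨fun i => E (i : ℕ), hEmeas, hTr_eq⟩
  -- the staircase cells
  set Cl : ℕ → Set X := fun j => T j ∩ (A'' j)ᶜ with hCldef
  have hClS : ∀ j : Fin r, Cl (j : ℕ) ∈ S := by
    intro j
    rw [hS]
    refine ⟨fun l => if (l : ℕ) < (j : ℕ) then E (l : ℕ)
      else if l = j then (A' j)ᶜ else Set.univ, ?_, ?_⟩
    · intro l
      by_cases h1 : (l : ℕ) < (j : ℕ)
      · simp only [if_pos h1]; exact hEmeas l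
      · simp only [if_neg h1]
        by_cases h2 : l = j
        · subst h2; simp only [if_pos rfl]; exact (hA'meas l).compl
        · simp only [if_neg h2]; exact MeasurableSet.univ
    · rw [hCldef]
      simp only
      rw [hTrange]
      ext x
      simp only [Set.mem_inter_iff, Set.mem_iInter, Finset.mem_range, Set.mem_compl_iff]
      constructor
      · rintro ⟨h1, h2⟩ l
        by_cases hl1 : (l : ℕ) < (j : ℕ)
        · simp only [if_pos hl1]; exact h1 l hl1
        · simp only [if_neg hl1]
          by_cases hl2 : l = j
          · subst hl2
            simp only [if_pos rfl, Set.mem_compl_iff]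
            rw [← hA''Fin]; exact h2
          · simp only [if_neg hl2]; trivial
      · intro h
        constructor
        · intro l hl
          have hlr : l < r := hl.trans j.isLt
          have := h ⟨l, hlr⟩
          simpa only [if_pos (show ((⟨l, hlr⟩ : Fin r) : ℕ) < (j : ℕ) from hl)] using this
        · have := h j
          simp only [lt_self_iff_false, if_neg, if_pos rfl, Set.mem_compl_iff] at this
          rw [← hA''Fin] at this
          exact this
  -- the partition
  set Q : Finset (Set X) :=
    insert (T r) ((Finset.univ.filter (fun j : Fin r => ¬ c (j : ℕ))).image
      (fun j : Fin r => Cl (j : ℕ))) with hQdef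
  -- disjointness facts
  have hstep : ∀ j : ℕ, ¬ c j → T (j + 1) = T j ∩ A'' j := by
    intro j hj
    rw [hTdef, pTower_succ, if_neg hj]
  have hTsubA'' : ∀ j k : ℕ, j < k → ¬ c j → T k ⊆ A'' j := by
    intro j k hjk hj
    have h1 : T k ⊆ T (j + 1) := pTower_mono A'' μ θ hjk
    rw [hstep j hj] at h1
    exact h1.trans Set.inter_subset_right
  have hClsub : ∀ j : ℕ, Cl j ⊆ (A'' j)ᶜ := fun j => Set.inter_subset_right
  have hdisjClT : ∀ j k : ℕ, j < k → ¬ c j → Disjoint (Cl j) (T k) := by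
    intro j k hjk hj
    exact (disjoint_compl_left (a := A'' j)).mono (hClsub j) (hTsubA'' j k hjk hj)
  have hdisjClCl : ∀ j k : ℕ, j < k → ¬ c j → Disjoint (Cl j) (Cl k) := by
    intro j k hjk hj
    exact (hdisjClT j k hjk hj).mono_right Set.inter_subset_left
  have hθT : ∀ j : ℕ, ¬ c j → θ ≤ (μ (Cl j)).toReal := by
    intro j hj
    exact not_lt.mp hj
  refine ⟨Q, ?_, ?_, ?_, ?_, T r, ?_, ?_, ?_⟩
  · -- membership in S
    intro s hs
    rw [hQdef] at hs
    simp only [Finset.mem_insert, Finset.mem_image, Finset.mem_filter, Finset.mem_univ,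
      true_and] at hs
    rcases hs with rfl | ⟨j, _, rfl⟩
    · exact hTrS
    · exact hClS j
  · -- pairwise disjoint
    intro s hs t ht hst
    simp only [hQdef, Finset.coe_insert, Set.mem_insert_iff, Finset.coe_image,
      Finset.coe_filter, Finset.mem_univ, true_and, Set.mem_image, Set.mem_setOf_eq] at hs ht
    rcases hs with rfl | ⟨j, hj, rfl⟩ <;> rcases ht with rfl | ⟨k, hk, rfl⟩
    · exact absurd rfl hst
    · exact (hdisjClT (k : ℕ) r k.isLt hk).symm
    · exact hdisjClT (j : ℕ) r j.isLt hj
    · rcases lt_trichotomy (j : ℕ) (k : ℕ) with h | h | h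
      · exact hdisjClCl _ _ h hj
      · exact absurd (congrArg Cl h) hst
      · exact (hdisjClCl _ _ h hk).symm
  · -- union is univ
    have hu := pTower_union A'' μ θ r
    apply Set.eq_univ_of_univ_subset
    rw [← hu]
    rintro x (hx | hx)
    · exact ⟨T r, by simp [hQdef], hx⟩
    · simp only [Set.mem_iUnion, Finset.mem_range] at hx
      obtain ⟨l, hl, hx⟩ := hx
      by_cases hc : c l
      · rw [if_pos hc] at hx; exact absurd hx (Set.notMem_empty x)
      · rw [if_neg hc] at hx
        refine ⟨Cl l, ?_, hx⟩
        simp only [hQdef, Finset.coe_insert, Set.mem_insert_iff, Finset.coe_image,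
          Finset.coe_filter, Finset.mem_univ, true_and, Set.mem_image, Set.mem_setOf_eq]
        exact Or.inr ⟨⟨l, hl⟩, hc, rfl⟩
  · -- measures at least θ
    intro s hs
    simp only [hQdef, Finset.mem_insert, Finset.mem_image, Finset.mem_filter,
      Finset.mem_univ, true_and] at hs
    rcases hs with rfl | ⟨j, hj, rfl⟩
    · exact hAθ.trans (hmono (subset_pTower A'' μ θ hAsub r))
    · exact hθT _ hj
  · -- T r ∈ Q
    simp [hQdef]
  · -- A ⊆ T r
    exact subset_pTower A'' μ θ hAsub r
  · -- the B' family
    set G : Fin r → Fin r → Set X := fun i l =>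
      E (l : ℕ) ∩ (if (l : ℕ) < (i : ℕ) then A' l else if l = i then (A' i)ᶜ else Set.univ)
      with hGdef
    set B' : Fin r → Set X := fun i => ⋂ l : Fin r, G i l with hB'def
    have hB'subT : ∀ i, B' i ⊆ T r := by
      intro i
      rw [hTr_eq]
      exact Set.iInter_mono fun l => Set.inter_subset_left
    have hB'subCompl : ∀ i, B' i ⊆ (A' i)ᶜ := by
      intro i
      refine (Set.iInter_subset _ i).trans ?_
      simp only [hGdef, lt_self_iff_false, if_false, if_pos rfl]
      exact Set.inter_subset_right
    have hB'subA' : ∀ i k : Fin r, (i : ℕ) < (k : ℕ) → B' k ⊆ A' i := by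
      intro i k hik
      refine (Set.iInter_subset _ i).trans ?_
      simp only [hGdef, if_pos hik]
      exact Set.inter_subset_right
    refine ⟨B', ?_, ?_, ?_, ?_⟩
    · -- B' i ∈ S
      intro i
      rw [hS]
      refine ⟨G i, ?_, rfl⟩
      intro l
      refine (hEmeas l).inter ?_
      by_cases h1 : (l : ℕ) < (i : ℕ)
      · simp only [if_pos h1]; exact hA'meas l
      · simp only [if_neg h1]
        by_cases h2 : l = i
        · subst h2; simp only [if_pos rfl]; exact (hA'meas l).compl
        · simp only [if_neg h2]; exact MeasurableSet.univ
    · -- pairwise disjoint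
      intro i k hik
      rcases lt_trichotomy (i : ℕ) (k : ℕ) with h | h | h
      · exact (disjoint_compl_left (a := A' i)).mono (hB'subCompl i) (hB'subA' i k h)
      · exact absurd (Fin.ext h) hik
      · exact ((disjoint_compl_left (a := A' k)).mono (hB'subCompl k) (hB'subA' k i h)).symm
    · -- measure < θ
      intro i
      by_cases hc : c (i : ℕ)
      · have hsub : B' i ⊆ T (i : ℕ) ∩ (A'' (i : ℕ))ᶜ := by
          refine Set.subset_inter ?_ ?_
          · exact (hB'subT i).trans (pTower_mono A'' μ θ (le_of_lt i.isLt))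
          · rw [hA''Fin]; exact hB'subCompl i
        exact lt_of_le_of_lt (hmono hsub) hc
      · have hsub : B' i ⊆ (∅ : Set X) := by
          have h1 : B' i ⊆ A' i := by
            have := hTsubA'' (i : ℕ) r i.isLt hc
            rw [hA''Fin] at this
            exact (hB'subT i).trans this
          intro x hx
          exact absurd (h1 hx) (hB'subCompl i hx)
        have : μ (B' i) = 0 := measure_mono_null hsub measure_empty
        rw [this]
        simpa using hθ0
    · -- decomposition of B \ A
      apply Set.Subset.antisymm
      · rintro x ⟨hxT, hxA⟩
        rw [hAeq] at hxA
        simp only [Set.mem_iInter, not_forall] at hxA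
        have hex : ∃ n : ℕ, ∃ h : n < r, x ∉ A' ⟨n, h⟩ := by
          obtain ⟨i, hi⟩ := hxA
          exact ⟨(i : ℕ), i.isLt, by simpa using hi⟩
        set n0 := Nat.find hex with hn0
        obtain ⟨hn0r, hn0x⟩ := Nat.find_spec hex
        set i0 : Fin r := ⟨n0, hn0r⟩ with hi0
        have hxE : ∀ l : Fin r, x ∈ E (l : ℕ) := by
          rw [hTr_eq] at hxT
          exact fun l => Set.mem_iInter.mp hxT l
        refine Set.mem_iUnion.mpr ⟨i0, Set.mem_iInter.mpr fun l => ?_⟩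
        refine ⟨hxE l, ?_⟩
        by_cases h1 : (l : ℕ) < (i0 : ℕ)
        · simp only [if_pos h1]
          by_contra hxl
          exact Nat.find_min hex h1 ⟨l.isLt, by simpa using hxl⟩
        · simp only [if_neg h1]
          by_cases h2 : l = i0
          · subst h2
            simp only [if_pos rfl, Set.mem_compl_iff]
            exact hn0x
          · simp only [if_neg h2]; trivial
      · refine Set.iUnion_subset fun i => ?_
        refine Set.subset_diff.mpr ⟨hB'subT i, ?_⟩
        exact (disjoint_compl_left (a := A' i)).mono (hB'subCompl i) (hAsubA' i)
end

section
/- Let n ≥ r ≥ 2 and 0 < α, η < 1 with rη ≤ 1 − α. Let H = (n, ⟨(X_i,Σ_i,μ_i)⟩, 𝓗) be an η-nonatomic hypergraph system, e ∈ 𝓗 with |e| = r, and S_{∂e} the family of sets of the form ∩_{e' ∈ ∂e} A_{e'} with A_{e'} measurable with respect to the coordinates in e'. Then for every A ∈ S_{∂e} with μ(A) < α there exists B ∈ S_{∂e} with A ⊆ B and α ≤ μ(B) < α + 2η. -/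
open MeasureTheory

/-- `A ⊆ ∏ i, X i` depends only on the coordinates in `e`. -/
def CoordDependsOn {n : ℕ} {X : Fin n → Type*} (e : Finset (Fin n)) (A : Set (∀ i, X i)) : Prop :=
  ∀ x y : ∀ i, X i, (∀ i ∈ e, x i = y i) → (x ∈ A ↔ y ∈ A)

/-- `A` belongs to `B_e`: it is measurable and depends only on the coordinates in `e`. -/
def CubeSet {n : ℕ} {X : Fin n → Type*} [∀ i, MeasurableSpace (X i)]
    (e : Finset (Fin n)) (A : Set (∀ i, X i)) : Prop :=
  MeasurableSet A ∧ CoordDependsOn e A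

/-- The boundary `∂e` of `e`: subsets of `e` of size `|e| - 1`. -/
def bdry {n : ℕ} (e : Finset (Fin n)) : Finset (Finset (Fin n)) :=
  e.powerset.filter (fun e' => e'.card + 1 = e.card)

/-- `A ∈ S_{∂e}`: `A` is an intersection `⋂_{e' ∈ ∂e} A_{e'}` with `A_{e'} ∈ B_{e'}`. -/
def SPartial {n : ℕ} {X : Fin n → Type*} [∀ i, MeasurableSpace (X i)]
    (e : Finset (Fin n)) (A : Set (∀ i, X i)) : Prop :=
  ∃ F : Finset (Fin n) → Set (∀ i, X i),
    (∀ e' ∈ bdry e, CubeSet e' (F e')) ∧ A = ⋂ e' ∈ bdry e, F e'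

/-- Every atom of `ν` has measure at most `η`. -/
def AtomsLE {Y : Type*} [MeasurableSpace Y] (ν : Measure Y) (η : ℝ) : Prop :=
  ∀ A : Set Y, MeasurableSet A → 0 < ν A →
    (∀ B : Set Y, B ⊆ A → MeasurableSet B → ν B = 0 ∨ ν B = ν A) →
    (ν A).toReal ≤ η

open scoped ENNReal

/-! Drop the factors `F f` of `A = ⋂_{f ∈ ∂e} F f` one at a time: the measure rises from
`μ(A) < α` to `μ(univ) = 1 > α`, so some step goes from `μ(P ∩ F f) < α` to `μ(P) ≥ α`.
Replacing `F f` by `F f ∪ {x | x i ∈ S}` for a coordinate `i ∈ f` stays inside `S_{∂e}` and adds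
the mass `ν S`, where `ν` is the law of `x i` on `P \ F f`. Since `ν ≤ μ i`, the atoms of `ν` weigh
at most `η`, and a greedy exhaustion shows that such a measure attains every mass up to an
error `η`. -/

namespace MeasureTheory.Measure

variable {Y : Type*} [MeasurableSpace Y] (ν : Measure Y) [IsFiniteMeasure ν]

/-- Splitting a non-atom of `W` lowers the mass by at least `δ`, which can only happen finitely
often. -/
lemma exists_atom_subset_of_forall_le {δ : ℝ≥0∞} (hδ : δ ≠ 0) {W : Set Y} (hW : MeasurableSet W)
    (hW0 : 0 < ν W) (hgap : ∀ U ⊆ W, MeasurableSet U → ν U = 0 ∨ δ ≤ ν U) :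
    ∃ U ⊆ W, MeasurableSet U ∧ 0 < ν U ∧ ∀ V ⊆ U, MeasurableSet V → ν V = 0 ∨ ν V = ν U := by
  obtain ⟨K, hK⟩ := ENNReal.exists_nat_mul_gt hδ (measure_ne_top ν W)
  induction K generalizing W with
  | zero => simp at hK
  | succ K ih =>
    by_cases hatom : ∀ V ⊆ W, MeasurableSet V → ν V = 0 ∨ ν V = ν W
    · exact ⟨W, subset_rfl, hW, hW0, hatom⟩
    push Not at hatom
    obtain ⟨V, hVW, hV, hV0, hVW'⟩ := hatom
    have hsplit : ν V + ν (W \ V) = ν W := by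
      rw [measure_add_sdiff hV.nullMeasurableSet, Set.union_eq_self_of_subset_left hVW]
    have hδrest : δ ≤ ν (W \ V) := by
      refine (hgap _ Set.sdiff_subset (hW.diff hV)).resolve_left fun h => hVW' ?_
      rwa [h, add_zero] at hsplit
    have hVK : ν V < K * δ := by
      have : ν V + δ < K * δ + δ := by
        calc ν V + δ ≤ ν W := hsplit ▸ add_le_add_right hδrest _
          _ < K * δ + δ := by rwa [Nat.cast_succ, add_one_mul] at hK
      exact (ENNReal.add_lt_add_iff_right (ne_top_of_le_ne_top (measure_ne_top ν _) hδrest)).1 this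
    obtain ⟨U, hUV, hU⟩ := ih hV (pos_iff_ne_zero.2 hV0)
      (fun U hU => hgap U (hU.trans hVW)) hVK
    exact ⟨U, hUV.trans hVW, hU⟩

lemma exists_disjoint_half_maximal {t : ℝ≥0∞} {S : Set Y} (hS : ν S ≤ t) :
    ∃ U, MeasurableSet U ∧ Disjoint S U ∧ ν S + ν U ≤ t ∧
      ∀ V, MeasurableSet V → Disjoint S V → ν S + ν V ≤ t → ν V ≤ 2 * ν U := by
  set d := ⨆ (V : Set Y) (_ : MeasurableSet V ∧ Disjoint S V ∧ ν S + ν V ≤ t), ν V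
  have hle_d : ∀ V, MeasurableSet V → Disjoint S V → ν S + ν V ≤ t → ν V ≤ d :=
    fun V hV hSV hVt => le_iSup₂_of_le V ⟨hV, hSV, hVt⟩ le_rfl
  by_cases hd : d = 0
  · refine ⟨∅, .empty, Set.disjoint_empty S, ?_, fun V hV hSV hVt => ?_⟩
    · rwa [measure_empty, add_zero]
    · simpa [hd] using hle_d V hV hSV hVt
  have hd_top : d ≠ ∞ := ne_top_of_le_ne_top (measure_ne_top ν Set.univ)
    (iSup₂_le fun V _ => measure_mono (Set.subset_univ V))
  obtain ⟨U, ⟨hU, hSU, hUt⟩, hdU⟩ : ∃ U, (MeasurableSet U ∧ Disjoint S U ∧ ν S + ν U ≤ t) ∧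
      d / 2 < ν U := by
    simpa only [d, lt_iSup_iff, exists_prop] using ENNReal.half_lt_self hd hd_top
  refine ⟨U, hU, hSU, hUt, fun V hV hSV hVt => (hle_d V hV hSV hVt).trans ?_⟩
  rw [mul_comm, ← ENNReal.div_le_iff (by norm_num) (by norm_num)]
  exact hdU.le

/-- Greedy exhaustion: repeatedly add a disjoint piece of at least half the largest admissible
mass; the pieces have summable masses, so in the limit no admissible non-null piece is left. -/
lemma exists_saturated_measurableSet (t : ℝ≥0∞) :
    ∃ S, MeasurableSet S ∧ ν S ≤ t ∧
      ∀ V, MeasurableSet V → Disjoint S V → ν S + ν V ≤ t → ν V = 0 := by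
  choose! U hU hSU hUt hUmax using fun S (hS : ν S ≤ t) => ν.exists_disjoint_half_maximal hS
  let g : ℕ → Set Y := fun k => Nat.rec ∅ (fun _ S => S ∪ U S) k
  have hg_succ : ∀ k, g (k + 1) = g k ∪ U (g k) := fun _ => rfl
  have hg : ∀ k, MeasurableSet (g k) ∧ ν (g k) ≤ t := by
    intro k
    induction k with
    | zero => exact ⟨.empty, by simp [g]⟩
    | succ k ih =>
      rw [hg_succ]
      exact ⟨ih.1.union (hU _ ih.2), (measure_union (hSU _ ih.2) (hU _ ih.2)).trans_le (hUt _ ih.2)⟩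
  have hsum : ∀ m, ∑ k ∈ Finset.range m, ν (U (g k)) = ν (g m) := by
    intro m
    induction m with
    | zero => simp [g]
    | succ m ih =>
      rw [Finset.sum_range_succ, ih, hg_succ, measure_union (hSU _ (hg m).2) (hU _ (hg m).2)]
  have hmono : Monotone g :=
    monotone_nat_of_le_succ fun k => (hg_succ k).symm ▸ Set.subset_union_left
  refine ⟨⋃ k, g k, .iUnion fun k => (hg k).1, ?_, fun V hV hSV hVt => ?_⟩
  · rw [hmono.measure_iUnion]
    exact iSup_le fun k => (hg k).2
  have hbound : ∀ k, ν V ≤ 2 * ν (U (g k)) := fun k =>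
    hUmax _ (hg k).2 V hV (hSV.mono_left (Set.subset_iUnion g k))
      ((add_le_add_left (measure_mono (Set.subset_iUnion g k)) _).trans hVt)
  by_contra hV0
  obtain ⟨m, hm⟩ := ENNReal.exists_nat_mul_gt hV0 (b := 2 * ν Set.univ) (by finiteness)
  refine hm.not_ge ?_
  calc (m : ℝ≥0∞) * ν V = ∑ _k ∈ Finset.range m, ν V := by simp
    _ ≤ ∑ k ∈ Finset.range m, 2 * ν (U (g k)) := Finset.sum_le_sum fun k _ => hbound k
    _ = 2 * ν (g m) := by rw [← Finset.mul_sum, hsum]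
    _ ≤ 2 * ν Set.univ := by gcongr; exact Set.subset_univ _

end MeasureTheory.Measure

namespace AtomsLE

variable {Y : Type*} [MeasurableSpace Y] {μ ν : Measure Y} {η : ℝ}

lemma measure_le_ofReal [IsFiniteMeasure ν] (hν : AtomsLE ν η) {S : Set Y} (hS : MeasurableSet S)
    (hS0 : 0 < ν S) (hatom : ∀ B ⊆ S, MeasurableSet B → ν B = 0 ∨ ν B = ν S) :
    ν S ≤ ENNReal.ofReal η := by
  rw [← ENNReal.ofReal_toReal (measure_ne_top ν S)]
  exact ENNReal.ofReal_le_ofReal (hν S hS hS0 hatom)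

/-- A `ν`-atom `S` contains a `μ`-atom of the same `ν`-mass: its intersection with a carrier of
the part of `μ` absolutely continuous with respect to `ν`. -/
lemma mono [IsFiniteMeasure μ] (hμ : AtomsLE μ η) (hle : ν ≤ μ) : AtomsLE ν η := by
  have : IsFiniteMeasure ν := isFiniteMeasure_of_le μ hle
  have hsing := μ.mutuallySingular_singularPart ν
  set N := hsing.nullSet
  have hμ_null : ∀ B ⊆ N, ν B = 0 → μ B = 0 := by
    intro B hBN hνB
    rw [μ.haveLebesgueDecomposition_add ν, Measure.add_apply,
      measure_mono_null hBN hsing.measure_nullSet, zero_add]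
    exact withDensity_absolutelyContinuous ν _ hνB
  intro S hS hS0 hatom
  have hTmeas : MeasurableSet (S ∩ N) := hS.inter hsing.measurableSet_nullSet
  have hνT : ν (S ∩ N) = ν S := measure_inter_conull hsing.measure_compl_nullSet
  have hTatom : ∀ B ⊆ S ∩ N, MeasurableSet B → μ B = 0 ∨ μ B = μ (S ∩ N) := by
    intro B hB hBmeas
    rcases hatom B (hB.trans Set.inter_subset_left) hBmeas with hνB | hνB
    · exact Or.inl (hμ_null B (hB.trans Set.inter_subset_right) hνB)
    · refine Or.inr (measure_eq_measure_of_null_sdiff hB (hμ_null _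
        (Set.sdiff_subset.trans Set.inter_subset_right) ?_))
      rw [measure_sdiff hB hBmeas.nullMeasurableSet (measure_ne_top ν B), hνB, hνT, tsub_self]
  have hμT : ν S ≤ μ (S ∩ N) := hνT ▸ hle _
  calc (ν S).toReal ≤ (μ (S ∩ N)).toReal := ENNReal.toReal_mono (measure_ne_top μ _) hμT
    _ ≤ η := hμ _ hTmeas (hS0.trans_le hμT) hTatom

/-- Saturate greedily below `t`; if a gap `δ` remains, the complement has no non-null subset of
mass `< δ`, hence contains an atom, whose mass lies in `[δ, η]`. -/
lemma exists_measure_mem_Icc [IsFiniteMeasure ν] (hν : AtomsLE ν η) {t : ℝ≥0∞}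
    (ht : t ≤ ν Set.univ) :
    ∃ S, MeasurableSet S ∧ ν S ∈ Set.Icc t (t + ENNReal.ofReal η) := by
  obtain ⟨S, hS, hSt, hSmax⟩ := ν.exists_saturated_measurableSet t
  rcases hSt.eq_or_lt with hSt | hSt
  · exact ⟨S, hS, hSt.ge, hSt.le.trans le_self_add⟩
  have hgap : ∀ U ⊆ Sᶜ, MeasurableSet U → ν U = 0 ∨ t - ν S ≤ ν U := by
    intro U hUS hU
    refine or_iff_not_imp_right.2 fun hlt =>
      hSmax U hU (Set.subset_compl_iff_disjoint_left.1 hUS) ?_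
    exact (lt_tsub_iff_left.1 (not_le.1 hlt)).le
  have hcompl : 0 < ν Sᶜ := by
    refine pos_iff_ne_zero.2 fun h0 => hSt.not_ge ?_
    rwa [← measure_add_measure_compl hS, h0, add_zero] at ht
  obtain ⟨U, hUS, hU, hU0, hatom⟩ := ν.exists_atom_subset_of_forall_le (tsub_pos_of_lt hSt).ne'
    hS.compl hcompl hgap
  have hδU := (hgap U hUS hU).resolve_left hU0.ne'
  have hSU : ν (S ∪ U) = ν S + ν U := measure_union (Set.subset_compl_iff_disjoint_left.1 hUS) hU
  refine ⟨S ∪ U, hS.union hU, ?_, ?_⟩ <;> rw [hSU]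
  · exact le_add_tsub.trans (add_le_add_right hδU _)
  · exact add_le_add hSt.le (hν.measure_le_ofReal hU hU0 hatom)

lemma exists_cylinder_measure_pi_mem_Icc {ι : Type*} [Fintype ι] {X : ι → Type*}
    [∀ i, MeasurableSpace (X i)] {μ : ∀ i, Measure (X i)} [∀ i, IsProbabilityMeasure (μ i)]
    {i : ι} (hμ : AtomsLE (μ i) η) {P C : Set (∀ i, X i)} (hC : MeasurableSet C) {a : ℝ≥0∞}
    (hPC : Measure.pi μ (P ∩ C) ≤ a) (haP : a ≤ Measure.pi μ P) :
    ∃ S, MeasurableSet S ∧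
      Measure.pi μ (P ∩ (C ∪ Function.eval i ⁻¹' S)) ∈ Set.Icc a (a + ENNReal.ofReal η) := by
  set ν := ((Measure.pi μ).restrict (P \ C)).map (Function.eval i)
  have hνle : ν ≤ μ i := (measurePreserving_eval μ i).map_eq ▸
    Measure.map_mono Measure.restrict_le_self (measurable_pi_apply i)
  have hν_apply : ∀ s, MeasurableSet s →
      ν s = Measure.pi μ ((P \ C) ∩ Function.eval i ⁻¹' s) := fun s hs => by
    rw [Measure.map_apply (measurable_pi_apply i) hs,
      Measure.restrict_apply (measurable_pi_apply i hs), Set.inter_comm]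
  have hPsplit : Measure.pi μ (P ∩ C) + ν Set.univ = Measure.pi μ P := by
    rw [hν_apply _ .univ, Set.preimage_univ, Set.inter_univ, measure_inter_add_sdiff _ hC]
  obtain ⟨S, hS, hSa, hSη⟩ := (hμ.mono hνle).exists_measure_mem_Icc
    (t := a - Measure.pi μ (P ∩ C)) (tsub_le_iff_left.2 (hPsplit ▸ haP))
  set B := P ∩ (C ∪ Function.eval i ⁻¹' S)
  have hB : Measure.pi μ B = Measure.pi μ (P ∩ C) + ν S := by
    rw [hν_apply S hS, ← measure_inter_add_sdiff B hC]
    congr 2 <;> ext x <;> simp only [B, Set.mem_inter_iff, Set.mem_union, Set.mem_sdiff] <;> tauto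
  refine ⟨S, hS, ?_, ?_⟩ <;> rw [hB]
  · exact le_add_tsub.trans (add_le_add_right hSa _)
  · rw [← add_tsub_cancel_of_le hPC, add_assoc]
    exact add_le_add_right hSη _

end AtomsLE

section HypergraphSets

variable {n : ℕ} {X : Fin n → Type*} [∀ i, MeasurableSpace (X i)] {e f : Finset (Fin n)}

lemma CubeSet.univ : CubeSet f (Set.univ : Set (∀ i, X i)) :=
  ⟨.univ, fun _ _ _ => Iff.rfl⟩

lemma CubeSet.union {C D : Set (∀ i, X i)} (hC : CubeSet f C) (hD : CubeSet f D) :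
    CubeSet f (C ∪ D) :=
  ⟨hC.1.union hD.1, fun x y hxy => by
    rw [Set.mem_union, Set.mem_union, hC.2 x y hxy, hD.2 x y hxy]⟩

lemma CubeSet.inter {C D : Set (∀ i, X i)} (hC : CubeSet f C) (hD : CubeSet f D) :
    CubeSet f (C ∩ D) :=
  ⟨hC.1.inter hD.1, fun x y hxy => by
    rw [Set.mem_inter_iff, Set.mem_inter_iff, hC.2 x y hxy, hD.2 x y hxy]⟩

lemma CubeSet.preimage_eval {i : Fin n} (hi : i ∈ f) {s : Set (X i)} (hs : MeasurableSet s) :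
    CubeSet f (Function.eval i ⁻¹' s) :=
  ⟨measurable_pi_apply i hs, fun x y hxy => by
    simp only [Set.mem_preimage, Function.eval, hxy i hi]⟩

lemma SPartial.biInter {T : Finset (Finset (Fin n))} (hT : T ⊆ bdry e)
    {F : Finset (Fin n) → Set (∀ i, X i)} (hF : ∀ f ∈ T, CubeSet f (F f)) :
    SPartial e (⋂ f ∈ T, F f) := by
  classical
  refine ⟨fun f => if f ∈ T then F f else Set.univ, fun f _ => ?_, ?_⟩
  · dsimp only
    split_ifs with hf
    exacts [hF f hf, CubeSet.univ]
  · ext x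
    simp only [Set.mem_iInter]
    refine ⟨fun hx f _ => ?_, fun hx f hf => by simpa [hf] using hx f (hT hf)⟩
    split_ifs with hfT
    exacts [hx f hfT, trivial]

lemma SPartial.inter_cubeSet {A C : Set (∀ i, X i)} (hA : SPartial e A) (hf : f ∈ bdry e)
    (hC : CubeSet f C) : SPartial e (A ∩ C) := by
  classical
  obtain ⟨F, hF, rfl⟩ := hA
  refine ⟨fun g => F g ∩ if g = f then C else Set.univ, fun g hg => (hF g hg).inter ?_, ?_⟩
  · split_ifs with hgf
    exacts [hgf ▸ hC, CubeSet.univ]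
  · ext x
    simp only [Set.mem_inter_iff, Set.mem_iInter]
    refine ⟨fun ⟨hxF, hxC⟩ g hg => ⟨hxF g hg, ?_⟩, fun hx => ⟨fun g hg => (hx g hg).1, ?_⟩⟩
    · split_ifs
      exacts [hxC, trivial]
    · simpa using (hx f hf).2

lemma nonempty_of_mem_bdry (he : 2 ≤ e.card) (hf : f ∈ bdry e) : f.Nonempty := by
  rw [bdry, Finset.mem_filter] at hf
  exact Finset.card_pos.1 (by omega)

end HypergraphSets

lemma Finset.exists_biInter_crossing {ι Ω β : Type*} [LinearOrder β] (m : Set Ω → β)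
    (F : ι → Set Ω) {a : β} (huniv : a ≤ m Set.univ) (T : Finset ι)
    (hT : m (⋂ i ∈ T, F i) < a) :
    ∃ T' ⊆ T, ∃ j ∈ T, a ≤ m (⋂ i ∈ T', F i) ∧ m ((⋂ i ∈ T', F i) ∩ F j) < a := by
  classical
  induction T using Finset.induction_on with
  | empty => exact absurd huniv (not_le.2 (by simpa using hT))
  | insert j T _ ih =>
    by_cases hlt : m (⋂ i ∈ T, F i) < a
    · obtain ⟨T', hT', j', hj', h⟩ := ih hlt
      exact ⟨T', hT'.trans (Finset.subset_insert j T), j', Finset.mem_insert_of_mem hj', h⟩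
    · refine ⟨T, Finset.subset_insert j T, j, Finset.mem_insert_self j T, not_lt.1 hlt, ?_⟩
      rwa [Finset.set_biInter_insert, Set.inter_comm] at hT

theorem stmt4_general {n r : ℕ} (hr : 2 ≤ r)
    {X : Fin n → Type*} [∀ i, MeasurableSpace (X i)]
    (μ : ∀ i, Measure (X i)) [∀ i, IsProbabilityMeasure (μ i)]
    (α η : ℝ) (hα1 : α < 1) (hη0 : 0 < η)
    (hnonatomic : ∀ i, AtomsLE (μ i) η)
    (e : Finset (Fin n)) (hecard : e.card = r)
    (A : Set (∀ i, X i)) (hA : SPartial e A) (hAα : ((Measure.pi μ) A).toReal < α) :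
    ∃ B : Set (∀ i, X i), SPartial e B ∧ A ⊆ B ∧
      α ≤ ((Measure.pi μ) B).toReal ∧ ((Measure.pi μ) B).toReal < α + 2 * η := by
  obtain ⟨F, hF, rfl⟩ := hA
  have hα0 : 0 ≤ α := ENNReal.toReal_nonneg.trans hAα.le
  obtain ⟨T, hT, f, hf, hαP, hPf⟩ := (bdry e).exists_biInter_crossing (Measure.pi μ) F
    (a := ENNReal.ofReal α) (by simpa using hα1.le)
    ((ENNReal.lt_ofReal_iff_toReal_lt (measure_ne_top _ _)).2 hAα)
  obtain ⟨i, hi⟩ := nonempty_of_mem_bdry (hecard ▸ hr) hf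
  obtain ⟨S, hS, hBα, hBη⟩ :=
    (hnonatomic i).exists_cylinder_measure_pi_mem_Icc (hF f hf).1 hPf.le hαP
  refine ⟨_, (SPartial.biInter hT fun g hg => hF g (hT hg)).inter_cubeSet hf
    ((hF f hf).union (CubeSet.preimage_eval hi hS)), fun x hx => ?_, ?_, ?_⟩
  · simp only [Set.mem_iInter] at hx
    exact ⟨Set.mem_iInter₂.2 fun g hg => hx g (hT hg), Or.inl (hx f hf)⟩
  · exact (ENNReal.ofReal_le_iff_le_toReal (measure_ne_top _ _)).1 hBα
  · rw [← ENNReal.ofReal_add hα0 hη0.le] at hBη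
    exact (ENNReal.toReal_le_of_le_ofReal (by linarith) hBη).trans_lt (by linarith)

/-- **Lemma 4.3.** In an `η`-nonatomic hypergraph system with `rη ≤ 1 - α`,
for every `A ∈ S_{∂e}` with `μ(A) < α` there is `B ∈ S_{∂e}` with `A ⊆ B` and
`α ≤ μ(B) < α + 2η`. -/
theorem stmt4 {n r : ℕ} (hnr : r ≤ n) (hr : 2 ≤ r)
    {X : Fin n → Type*} [∀ i, MeasurableSpace (X i)]
    (μ : ∀ i, Measure (X i)) [∀ i, IsProbabilityMeasure (μ i)]
    (α η : ℝ) (hα0 : 0 < α) (hα1 : α < 1) (hη0 : 0 < η) (hη1 : η < 1)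
    (hrη : r * η ≤ 1 - α)
    (hnonatomic : ∀ i, AtomsLE (μ i) η)
    (𝓗 : Finset (Finset (Fin n))) (e : Finset (Fin n)) (he : e ∈ 𝓗) (hecard : e.card = r)
    (A : Set (∀ i, X i)) (hA : SPartial e A) (hAα : ((Measure.pi μ) A).toReal < α) :
    ∃ B : Set (∀ i, X i), SPartial e B ∧ A ⊆ B ∧
      α ≤ ((Measure.pi μ) B).toReal ∧ ((Measure.pi μ) B).toReal < α + 2 * η :=
  stmt4_general hr μ α η hα1 hη0 hnonatomic e hecard A hA hAα
end
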